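/- Let (q_k)_{k≥1} and α_{k,i} be as in the four-species coefficient setup, and define c_i := α_{i+1,i}/(i+1) for i ≥ 1. Then c₁ = 1/4, c₂ = 1/6, c₃ = −1/12, and the sequence satisfies the homogeneous linear recursion c_i = c_{i−1} − c_{i−2} + (1/3)·c_{i−3} for all i ≥ 4. -/

import Mathlib

/-!
Integrating out `ξ₃`, then `ξ₂`, then `ξ₁` (splitting at `ξ₁ = x`) turns the recursion into
`q'(x) = Q(x) q(x) + (1 - x)² P(x) + (2x - x²) P(1)`, where `P(x) = ∫₀ˣ q` and
`Q(x) = ∫₀ˣ (1 - t)² dt = x - x² + x³/3`. On antiderivatives this is the affine map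
`P ↦ Q P + P(1) (X - Q)`, which preserves `P(1)` because `Q(1) = 1/3`; as `q₁ = Q` is the image of
the constant `1/4`, all antiderivatives are `P_k = Q P_{k-1} + (X - Q)/4` with `P_0 = X/4`.
Since `X ∣ Q`, `P_{k+1} - P_k = Q (P_k - P_{k-1})` is divisible by `X^{k+1}`, so coefficients
stabilise, and `c_i` is the coefficient of `X^{i+1}` in `P_{i+1}`. Because `X - Q = X² - X³/3`
has degree 3, comparing coefficients of degree `≥ 4` in `P_{k+1} = Q P_k + (X - Q)/4` gives the
recursion, which already holds at `i = 3` with `c₀ = 0`.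
-/

open MeasureTheory Polynomial Set intervalIntegral

namespace intervalIntegral

variable {g : ℝ → ℝ} {a b c : ℝ}

theorem integral_ite_gt (hc : c ∈ Icc a b) :
    ∫ t in a..b, (if c < t then g t else 0) = ∫ t in c..b, g t := by
  have hg : (fun t => if c < t then g t else 0) = (Ioi c).indicator g := by
    ext t; simp [indicator_apply]
  rw [hg, integral_of_le (hc.1.trans hc.2), integral_of_le hc.2,
    MeasureTheory.integral_indicator measurableSet_Ioi, Measure.restrict_restrict measurableSet_Ioi,
    inter_comm, Ioc_inter_Ioi, sup_eq_right.2 hc.1]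

theorem integral_ite_lt (hc : c ∈ Icc a b) :
    ∫ t in a..b, (if t < c then g t else 0) = ∫ t in a..c, g t := by
  have hg : (fun t => if t < c then g t else 0) = (Iio c).indicator g := by
    ext t; simp [indicator_apply]
  have hs : Iio c ∩ Ioc a b = Ioo a c := by
    ext t; simp only [mem_inter_iff, mem_Iio, mem_Ioc, mem_Ioo]
    constructor
    · rintro ⟨h1, h2, -⟩; exact ⟨h2, h1⟩
    · rintro ⟨h1, h2⟩; exact ⟨h2, h1, h2.le.trans hc.2⟩
  rw [hg, integral_of_le (hc.1.trans hc.2), integral_of_le hc.1,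
    MeasureTheory.integral_indicator measurableSet_Iio,
    Measure.restrict_restrict measurableSet_Iio, hs, integral_Ioc_eq_integral_Ioo]

end intervalIntegral

section TripleIntegral

variable {f F : ℝ → ℝ}

lemma integral_ite_lt_min_min_inner (hf : Continuous f) (hF : ∀ t, HasDerivAt F (f t) t)
    (x ξ₁ : ℝ) {ξ₂ : ℝ} (hξ₂ : ξ₂ ∈ Icc 0 1) :
    ∫ ξ₃ in (0:ℝ)..1, (if ξ₂ < min ξ₁ (min ξ₃ x) then f x + f ξ₁ + f ξ₂ + f ξ₃ else 0)
      = if ξ₂ < min ξ₁ x then (f x + f ξ₁ + f ξ₂) * (1 - ξ₂) + (F 1 - F ξ₂) else 0 := by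
  by_cases h : ξ₂ < min ξ₁ x
  · have hsplit : ∀ ξ₃, (if ξ₂ < min ξ₁ (min ξ₃ x) then f x + f ξ₁ + f ξ₂ + f ξ₃ else 0)
        = if ξ₂ < ξ₃ then f x + f ξ₁ + f ξ₂ + f ξ₃ else 0 := by
      intro ξ₃
      simp only [lt_min_iff] at h ⊢
      simp [h]
    have hderiv : ∀ t ∈ uIcc ξ₂ 1, HasDerivAt (fun t => (f x + f ξ₁ + f ξ₂) * t + F t)
        (f x + f ξ₁ + f ξ₂ + f t) t := fun t _ =>
      (((hasDerivAt_id t).const_mul _).add (hF t)).congr_deriv (by simp)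
    simp only [hsplit, if_pos h, integral_ite_gt hξ₂,
      integral_eq_sub_of_hasDerivAt hderiv ((by fun_prop : Continuous _).intervalIntegrable _ _)]
    ring
  · have hzero : ∀ ξ₃, (if ξ₂ < min ξ₁ (min ξ₃ x) then f x + f ξ₁ + f ξ₂ + f ξ₃ else 0) = 0 := by
      intro ξ₃
      simp only [lt_min_iff, not_and] at h ⊢
      simp +contextual [h]
    simp only [hzero, intervalIntegral.integral_zero, if_neg h]

lemma integral_ite_lt_min_min_middle (hf : Continuous f) (hF : ∀ t, HasDerivAt F (f t) t)
    (hF0 : F 0 = 0) {x ξ₁ : ℝ} (hx : x ∈ Icc 0 1) (hξ₁ : ξ₁ ∈ Icc 0 1) :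
    ∫ ξ₂ in (0:ℝ)..1, ∫ ξ₃ in (0:ℝ)..1,
        (if ξ₂ < min ξ₁ (min ξ₃ x) then f x + f ξ₁ + f ξ₂ + f ξ₃ else 0)
      = (f x + f ξ₁) * (min ξ₁ x - (min ξ₁ x) ^ 2 / 2) + (1 - min ξ₁ x) * F (min ξ₁ x)
          + F 1 * min ξ₁ x := by
  have hm : min ξ₁ x ∈ Icc (0:ℝ) 1 := ⟨le_min hξ₁.1 hx.1, (min_le_left _ _).trans hξ₁.2⟩
  have hFc : Continuous F := continuous_iff_continuousAt.2 fun t => (hF t).continuousAt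
  have hderiv : ∀ t ∈ uIcc 0 (min ξ₁ x), HasDerivAt
      (fun t => (f x + f ξ₁) * (t - t ^ 2 / 2) + (1 - t) * F t + F 1 * t)
      ((f x + f ξ₁ + f t) * (1 - t) + (F 1 - F t)) t := fun t _ =>
    ((((hasDerivAt_id t).sub ((hasDerivAt_pow 2 t).div_const 2)).const_mul _).add
      (((hasDerivAt_const t 1).sub (hasDerivAt_id t)).mul (hF t)) |>.add
      ((hasDerivAt_id t).const_mul _)).congr_deriv
        (by simp only [id_eq, Pi.sub_apply, Nat.cast_ofNat]; ring)
  rw [integral_congr (g := fun ξ₂ => if ξ₂ < min ξ₁ x then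
      (f x + f ξ₁ + f ξ₂) * (1 - ξ₂) + (F 1 - F ξ₂) else 0) fun ξ₂ hξ₂ =>
      integral_ite_lt_min_min_inner hf hF x ξ₁ (by rwa [uIcc_of_le zero_le_one] at hξ₂),
    integral_ite_lt hm,
    integral_eq_sub_of_hasDerivAt hderiv ((by fun_prop : Continuous _).intervalIntegrable _ _)]
  simp [hF0]

theorem integral_ite_lt_min_min (hf : Continuous f) (hF : ∀ t, HasDerivAt F (f t) t)
    (hF0 : F 0 = 0) {x : ℝ} (hx : x ∈ Icc 0 1) :
    ∫ ξ₁ in (0:ℝ)..1, ∫ ξ₂ in (0:ℝ)..1, ∫ ξ₃ in (0:ℝ)..1,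
        (if ξ₂ < min ξ₁ (min ξ₃ x) then f x + f ξ₁ + f ξ₂ + f ξ₃ else 0)
      = (x - x ^ 2 + x ^ 3 / 3) * f x + (1 - x) ^ 2 * F x + (2 * x - x ^ 2) * F 1 := by
  have hFc : Continuous F := continuous_iff_continuousAt.2 fun t => (hF t).continuousAt
  set h : ℝ → ℝ := fun ξ₁ => (f x + f ξ₁) * (min ξ₁ x - (min ξ₁ x) ^ 2 / 2)
    + (1 - min ξ₁ x) * F (min ξ₁ x) + F 1 * min ξ₁ x with h_def
  have hh : Continuous h := by fun_prop
  have hleft : ∀ t ∈ uIcc 0 x, HasDerivAt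
      (fun t => f x * (t ^ 2 / 2 - t ^ 3 / 6) + (t - t ^ 2 / 2) * F t + F 1 * (t ^ 2 / 2))
      (h t) t := by
    intro t ht
    rw [uIcc_of_le hx.1] at ht
    refine ((((hasDerivAt_pow 2 t).div_const 2).sub ((hasDerivAt_pow 3 t).div_const 6)).const_mul _
      |>.add (((hasDerivAt_id t).sub ((hasDerivAt_pow 2 t).div_const 2)).mul (hF t))
      |>.add (((hasDerivAt_pow 2 t).div_const 2).const_mul _)).congr_deriv ?_
    simp only [h_def, min_eq_left ht.2, id_eq, Pi.sub_apply, Nat.cast_ofNat]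
    ring
  have hright : ∀ t ∈ uIcc x 1, HasDerivAt
      (fun t => ((f x) * (x - x ^ 2 / 2) + (1 - x) * F x + F 1 * x) * t + (x - x ^ 2 / 2) * F t)
      (h t) t := by
    intro t ht
    rw [uIcc_of_le hx.2] at ht
    refine (((hasDerivAt_id t).const_mul _).add ((hF t).const_mul _)).congr_deriv ?_
    simp only [h_def, min_eq_right ht.1]
    ring
  calc _ = ∫ ξ₁ in (0:ℝ)..1, h ξ₁ := integral_congr fun ξ₁ hξ₁ =>
          integral_ite_lt_min_min_middle hf hF hF0 hx (by rwa [uIcc_of_le zero_le_one] at hξ₁)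
    _ = (∫ ξ₁ in (0:ℝ)..x, h ξ₁) + ∫ ξ₁ in x..1, h ξ₁ :=
          (integral_add_adjacent_intervals (hh.intervalIntegrable _ _)
            (hh.intervalIntegrable _ _)).symm
    _ = _ := by
          rw [integral_eq_sub_of_hasDerivAt hleft (hh.intervalIntegrable _ _),
            integral_eq_sub_of_hasDerivAt hright (hh.intervalIntegrable _ _)]
          simp only [hF0]
          ring

end TripleIntegral

namespace Polynomial

variable {K : Type*} [Field K]

noncomputable def antiderivative (p : K[X]) : K[X] :=
  p.sum fun n a => C (a / (n + 1)) * X ^ (n + 1)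

@[simp]
lemma coeff_antiderivative_zero (p : K[X]) : (antiderivative p).coeff 0 = 0 := by
  simp [antiderivative, Polynomial.sum]

@[simp]
lemma coeff_antiderivative_succ (p : K[X]) (n : ℕ) :
    (antiderivative p).coeff (n + 1) = p.coeff n / (n + 1) := by
  simp only [antiderivative, Polynomial.sum, finsetSum_coeff, coeff_C_mul_X_pow, add_left_inj,
    Finset.sum_ite_eq]
  split_ifs with h
  · rfl
  · simp [notMem_support_iff.1 h]

lemma eq_of_infinite_aeval_eq {L : Type*} [Field L] [Algebra K L] {p q : K[X]} {s : Set L}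
    (hs : s.Infinite) (h : ∀ x ∈ s, aeval x p = aeval x q) : p = q := by
  apply map_injective (algebraMap K L) (algebraMap K L).injective
  apply eq_of_infinite_eval_eq
  refine hs.mono fun x hx => ?_
  simpa only [aeval_def, eval₂_eq_eval_map, Set.mem_ofPred_eq] using h x hx

variable [CharZero K]

@[simp]
lemma derivative_antiderivative (p : K[X]) : derivative (antiderivative p) = p := by
  ext n
  rw [coeff_derivative, coeff_antiderivative_succ]
  field_simp

lemma antiderivative_derivative {p : K[X]} (hp : p.coeff 0 = 0) :
    antiderivative (derivative p) = p := by
  ext (_ | n)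
  · simp [hp]
  · rw [coeff_antiderivative_succ, coeff_derivative]
    field_simp

end Polynomial

namespace FourSpecies

variable {K : Type*} [Field K]

/-- `Q x = ∫₀ˣ (1 - t)² dt`; it is also `q₁`. -/
noncomputable def Q : K[X] := X - X ^ 2 + C (1/3) * X ^ 3

/-- The recursion `q ↦ q'` of the setup, acting on antiderivatives `P = ∫₀ˣ q`. -/
noncomputable def step (P : K[X]) : K[X] := Q * P + C (P.eval 1) * (X - Q)

/-- `primitive k = ∫₀ˣ q_k` for `k ≥ 1`. -/
noncomputable def primitive : ℕ → K[X]
  | 0 => C (1/4) * X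
  | k + 1 => step (primitive k)

lemma X_dvd_Q : X ∣ (Q : K[X]) := ⟨1 - X + C (1/3) * X ^ 2, by rw [Q]; ring⟩

lemma coeff_zero_step (P : K[X]) : (step P).coeff 0 = 0 := by
  simp [step, Q]

lemma eval_one_step (P : K[X]) : (step P).eval 1 = P.eval 1 := by
  simp only [step, Q, eval_add, eval_mul, eval_sub, eval_C, eval_X, eval_pow, one_pow]
  ring

lemma eval_one_primitive (k : ℕ) : (primitive k : K[X]).eval 1 = 1/4 := by
  induction k with
  | zero => simp [primitive]
  | succ k ih => rw [primitive, eval_one_step, ih]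

lemma primitive_succ (k : ℕ) :
    (primitive (k + 1) : K[X]) = Q * primitive k + C (1/4) * (X - Q) := by
  rw [primitive, step, eval_one_primitive]

lemma X_pow_dvd_primitive_succ_sub (k : ℕ) :
    X ^ (k + 1) ∣ (primitive (k + 1) - primitive k : K[X]) := by
  induction k with
  | zero =>
    rw [zero_add, pow_one, primitive_succ, primitive]
    exact dvd_sub (dvd_add (dvd_mul_of_dvd_left X_dvd_Q _)
      (dvd_mul_of_dvd_right (dvd_sub dvd_rfl X_dvd_Q) _)) (dvd_mul_left X _)
  | succ k ih =>
    have h : (primitive (k + 2) - primitive (k + 1) : K[X])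
        = Q * (primitive (k + 1) - primitive k) := by
      rw [primitive_succ (k + 1), primitive_succ k]
      ring
    rw [h, pow_succ']
    exact mul_dvd_mul X_dvd_Q ih

lemma coeff_primitive_of_le {n m k : ℕ} (hnm : n ≤ m) (hmk : m ≤ k) :
    (primitive k : K[X]).coeff n = (primitive m).coeff n := by
  induction k, hmk using Nat.le_induction with
  | base => rfl
  | succ k hmk ih =>
    rw [← ih, ← sub_eq_zero, ← coeff_sub]
    exact X_pow_dvd_iff.1 (X_pow_dvd_primitive_succ_sub k) n (by omega)

lemma coeff_Q_mul (p : K[X]) (n : ℕ) :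
    (Q * p).coeff (n + 3) = p.coeff (n + 2) - p.coeff (n + 1) + 1/3 * p.coeff n := by
  simp [Q, add_mul, sub_mul, mul_assoc, coeff_X_mul, coeff_X_pow_mul']

lemma coeff_primitive_diag_recursion (n : ℕ) :
    (primitive (n + 4) : K[X]).coeff (n + 4) = (primitive (n + 3)).coeff (n + 3)
      - (primitive (n + 2)).coeff (n + 2) + 1/3 * (primitive (n + 1)).coeff (n + 1) := by
  rw [primitive_succ, coeff_add, coeff_Q_mul, coeff_primitive_of_le (m := n + 2) le_rfl (by omega),
    coeff_primitive_of_le (m := n + 1) le_rfl (by omega)]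
  simp [Q, coeff_X, coeff_X_pow]

lemma coeff_primitive_zero (k : ℕ) : (primitive k : K[X]).coeff 0 = 0 := by
  cases k with
  | zero => simp [primitive]
  | succ k => simp [primitive_succ, Q, coeff_X, coeff_X_pow]

lemma coeff_primitive_one_one : (primitive 1 : K[X]).coeff 1 = 0 := by
  simp [primitive_succ, Q, add_mul, sub_mul, mul_assoc, coeff_X_mul, coeff_X_pow_mul', coeff_X,
    coeff_X_pow, coeff_primitive_zero]

lemma coeff_primitive_two_two : (primitive 2 : K[X]).coeff 2 = 1/4 := by
  simp [primitive_succ 1, Q, add_mul, sub_mul, mul_assoc, coeff_X_mul, coeff_X_pow_mul', coeff_X,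
    coeff_X_pow, coeff_primitive_zero, coeff_primitive_one_one]

lemma coeff_primitive_three_three [CharZero K] : (primitive 3 : K[X]).coeff 3 = 1/6 := by
  have h21 : (primitive 2 : K[X]).coeff 1 = 0 := by
    rw [coeff_primitive_of_le le_rfl one_le_two, coeff_primitive_one_one]
  norm_num [primitive_succ 2, Q, add_mul, sub_mul, mul_assoc, coeff_X_mul, coeff_X_pow_mul',
    coeff_X, coeff_X_pow, coeff_primitive_zero, coeff_primitive_two_two, h21]

lemma aeval_derivative_step {A : Type*} [Field A] [CharZero A] [Algebra K A] (P : K[X]) (x : A) :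
    aeval x (derivative (step P)) = (x - x ^ 2 + x ^ 3 / 3) * aeval x (derivative P)
      + (1 - x) ^ 2 * aeval x P + (2 * x - x ^ 2) * aeval 1 P := by
  rw [← map_one (algebraMap K A), aeval_algebraMap_apply_eq_algebraMap_eval, map_one]
  simp only [step, Q, one_div, derivative_mul, derivative_sub, derivative_X, derivative_X_pow_succ,
    derivative_C, Nat.cast_one, Nat.cast_ofNat, pow_one, zero_mul, zero_add, map_add, map_one,
    map_mul, map_pow, map_ofNat, map_inv₀, aeval_sub, aeval_X, aeval_C]
  field_simp
  ring

variable [CharZero K]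

lemma derivative_primitive_one : derivative (primitive 1 : K[X]) = Q := by
  apply Polynomial.funext
  intro x
  simp only [primitive, step, Q, one_div, eval_mul, eval_C, eval_X, mul_one,
    derivative_mul, derivative_sub, derivative_X, derivative_X_pow_succ, Nat.cast_one, map_add,
    map_one, pow_one, derivative_C, zero_mul, Nat.cast_ofNat, zero_add, eval_add, eval_sub,
    eval_one, eval_pow]
  ring

lemma antiderivative_Q : antiderivative (Q : K[X]) = primitive 1 := by
  rw [← derivative_primitive_one]
  exact antiderivative_derivative (coeff_zero_step _)

lemma antiderivative_eq_step_of_eq_integral [Algebra K ℝ] {p q : K[X]}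
    (h : ∀ x ∈ Icc (0 : ℝ) 1, aeval x q = ∫ ξ₁ in (0:ℝ)..1, ∫ ξ₂ in (0:ℝ)..1, ∫ ξ₃ in (0:ℝ)..1,
      if ξ₂ < min ξ₁ (min ξ₃ x) then aeval x p + aeval ξ₁ p + aeval ξ₂ p + aeval ξ₃ p else 0) :
    antiderivative q = step (antiderivative p) := by
  have hF : ∀ t : ℝ, HasDerivAt (fun t => aeval t (antiderivative p)) (aeval t p) t := fun t => by
    simpa using (antiderivative p).hasDerivAt_aeval t
  have hF0 : aeval (0 : ℝ) (antiderivative p) = 0 := by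
    rw [← coeff_zero_eq_aeval_zero', coeff_antiderivative_zero, map_zero]
  have hq : q = derivative (step (antiderivative p)) := by
    refine eq_of_infinite_aeval_eq (Icc_infinite (zero_lt_one (α := ℝ))) fun x hx => ?_
    rw [h x hx, integral_ite_lt_min_min p.continuous_aeval hF hF0 hx, aeval_derivative_step,
      derivative_antiderivative]
  rw [hq]
  exact antiderivative_derivative (coeff_zero_step _)

end FourSpecies

theorem bs4_c_sequence_recursion
    (q : ℕ → Polynomial ℚ)
    (hq1 : q 1 = X - X ^ 2 + C (1/3 : ℚ) * X ^ 3)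
    (hrec : ∀ k, 1 ≤ k → ∀ x ∈ Set.Icc (0 : ℝ) 1,
      (Polynomial.aeval x) (q (k + 1)) =
        ∫ ξ₁ in (0:ℝ)..1, ∫ ξ₂ in (0:ℝ)..1, ∫ ξ₃ in (0:ℝ)..1,
          if ξ₂ < min ξ₁ (min ξ₃ x) then
            (Polynomial.aeval x) (q k) + (Polynomial.aeval ξ₁) (q k)
              + (Polynomial.aeval ξ₂) (q k) + (Polynomial.aeval ξ₃) (q k)
          else 0)
    (c : ℕ → ℚ) (hc : ∀ i, c i = (q (i + 1)).coeff i / ((i : ℚ) + 1)) :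
    c 1 = 1 / 4 ∧ c 2 = 1 / 6 ∧ c 3 = -(1 / 12)
    ∧ ∀ i, 4 ≤ i → c i = c (i - 1) - c (i - 2) + (1 / 3) * c (i - 3) := by
  have hprim : ∀ k, 1 ≤ k → antiderivative (q k) = FourSpecies.primitive k := by
    intro k hk
    induction k, hk using Nat.le_induction with
    | base => rw [hq1]; exact FourSpecies.antiderivative_Q
    | succ k hk ih =>
      rw [FourSpecies.antiderivative_eq_step_of_eq_integral (hrec k hk), ih]
      rfl
  have hc_prim : ∀ i, c i = (FourSpecies.primitive (i + 1)).coeff (i + 1) := fun i => by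
    rw [hc, ← hprim (i + 1) (Nat.le_add_left 1 i), coeff_antiderivative_succ]
  have hc_rec : ∀ n, c (n + 3) = c (n + 2) - c (n + 1) + 1 / 3 * c n := fun n => by
    simpa only [hc_prim] using FourSpecies.coeff_primitive_diag_recursion n
  have h0 : c 0 = 0 := by rw [hc_prim]; exact FourSpecies.coeff_primitive_one_one
  have h1 : c 1 = 1 / 4 := by rw [hc_prim]; exact FourSpecies.coeff_primitive_two_two
  have h2 : c 2 = 1 / 6 := by rw [hc_prim]; exact FourSpecies.coeff_primitive_three_three
  refine ⟨h1, h2, by rw [hc_rec 0, h0, h1, h2]; norm_num, fun i hi => ?_⟩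
  obtain ⟨n, rfl⟩ : ∃ n, i = n + 3 := ⟨i - 3, by omega⟩
  simpa using hc_rec n
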